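/- Let n and k be integers with 4 ≤ k ≤ n−1, and let X ⊂ ℝ² be an n-independent node set with #X = d(n,k−3)+3 such that dim P_{k,X} ≥ 7. Assume additionally that there is a nonzero polynomial σ₀ of total degree ≤ k−2 vanishing at all the nodes of X. Then there exists a polynomial μ of exact total degree k−3 vanishing at exactly d(n,k−3) nodes of X (a maximal curve of degree k−3 for X), and the remaining three nodes of X are collinear. -/

import Mathlib

/-!
For `f ≠ 0` vanishing on `Y ⊆ X` and `deg f + d ≤ n`, the space `f · Π_d` lies in `P_{n,Y}`, which
has dimension `N_n - #Y` because `X` is `n`-independent; comparing dimensions of sums and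
intersections of two such spaces bounds numbers of nodes.

Applied to `σ₀`, this forces `deg σ₀ = k - 2`, and `dim P_{k,X} ≥ 7 > dim σ₀ · Π_2` provides
`p ∈ P_{k,X}` that is not a multiple of `σ₀`. Write `σ₀ = g σ₁`, `p = g p₁` with `σ₁, p₁` coprime.
If `σ₁` were constant, `p` would be in `σ₀ · Π_2`. If `deg σ₁ ≥ 2`, the spaces `σ₀ · Π_{n-k+2}` and
`p · Π_{n-k}` would intersect only in `p σ₁ · Π_{n-k-deg σ₁}`, so their sum would be too large for
`P_{n,X}`. Hence `σ₁` is a line and `deg g = k - 3`. The curve `g = 0` contains at most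
`d(n, k-3)` nodes; the others lie on both `σ₁ = 0` and `p₁ = 0`, and the same count gives the
Bezout-type bound: coprime curves share at most `deg σ₁ · deg p₁ ≤ 3` nodes. Since
`#X = d(n, k-3) + 3`, both bounds are attained.
-/

open MvPolynomial

noncomputable section

/-- A node (point) in the plane. -/
abbrev Pt : Type := Fin 2 → ℝ

/-- `p` is an `n`-fundamental polynomial of the node `A` with respect to the node set `X`. -/
def IsFund (n : ℕ) (X : Finset Pt) (A : Pt) (p : MvPolynomial (Fin 2) ℝ) : Prop :=
  p.totalDegree ≤ n ∧ eval A p = 1 ∧ ∀ B ∈ X, B ≠ A → eval B p = 0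

/-- The node set `X` is `n`-independent. -/
def NIndep (n : ℕ) (X : Finset Pt) : Prop := ∀ A ∈ X, ∃ p, IsFund n X A p

/-- `N_m = dim Π_m = (m+1)(m+2)/2`. -/
def Nn (m : ℕ) : ℕ := (m + 1) * (m + 2) / 2

/-- `d(n,k) = N_n - N_{n-k}`. -/
def dnk (n k : ℕ) : ℕ := Nn n - Nn (n - k)

/-- The space `P_{k,X}` of polynomials of total degree at most `k` vanishing on `X`. -/
def PkX (k : ℕ) (X : Finset Pt) : Submodule ℝ (MvPolynomial (Fin 2) ℝ) :=
  restrictTotalDegree (Fin 2) ℝ k ⊓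
    ⨅ A ∈ X, LinearMap.ker (aeval (R := ℝ) (S₁ := ℝ) (A : Fin 2 → ℝ)).toLinearMap

lemma two_mul_Nn (m : ℕ) : 2 * Nn m = (m + 1) * (m + 2) :=
  Nat.two_mul_div_two_of_even (Nat.even_mul_succ_self (m + 1))

lemma Nn_succ (m : ℕ) : Nn (m + 1) = Nn m + (m + 2) := by
  have h₁ := two_mul_Nn m
  have h₂ := two_mul_Nn (m + 1)
  have : (m + 1 + 1) * (m + 1 + 2) = (m + 1) * (m + 2) + 2 * (m + 2) := by ring
  omega

lemma Nn_add_two (m : ℕ) : Nn (m + 2) = Nn m + (2 * m + 5) := by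
  rw [Nn_succ, Nn_succ]
  ring

lemma two_mul_add_one_le_Nn (m : ℕ) : 2 * m + 1 ≤ Nn m := by
  induction m with
  | zero => decide
  | succ m ih => rw [Nn_succ]; omega

lemma Nn_mono : Monotone Nn :=
  monotone_nat_of_le_succ fun m => by rw [Nn_succ]; omega

lemma Nn_eq_choose (m : ℕ) : Nn m = (m + 2).choose 2 := by
  rw [Nat.choose_two_right, Nn, mul_comm]
  rfl

lemma Nn_add_add (a b c : ℕ) : Nn (a + b + c) + Nn c = Nn (a + c) + Nn (b + c) + a * b := by
  apply Nat.eq_of_mul_eq_mul_left two_pos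
  simp only [mul_add, two_mul_Nn]
  ring

namespace MvPolynomial

section Field

variable {σ K : Type*} [Field K]

theorem finrank_restrictTotalDegree [Fintype σ] (m : ℕ) :
    Module.finrank K (restrictTotalDegree σ K m) =
      (m + Fintype.card σ).choose (Fintype.card σ) := by
  classical
  have hset : {d : σ →₀ ℕ | (d.sum fun _ e => e) ≤ m}
      = ↑((Finset.range (m + 1)).biUnion fun j => (Finset.univ : Finset σ).finsuppAntidiag j) := by
    ext d
    simp [Finsupp.sum_fintype]
  have hdisj : (↑(Finset.range (m + 1)) : Set ℕ).PairwiseDisjoint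
      fun j => (Finset.univ : Finset σ).finsuppAntidiag j := by
    intro i _ j _ hij
    refine Finset.disjoint_left.2 fun d hi hj => hij ?_
    rw [Finset.mem_finsuppAntidiag] at hi hj
    rw [← hi.1, hj.1]
  rw [restrictTotalDegree, Module.finrank_eq_nat_card_basis (basisRestrictSupport K _), hset,
    Nat.card_coe_set_eq, Set.ncard_coe_finset, Finset.card_biUnion hdisj]
  simp only [Finset.card_finsuppAntidiag_nat_eq_multichoose, Finset.card_univ]
  exact Nat.sum_range_multichoose _ _

def mulTotalDegreeLE (f : MvPolynomial σ K) (d : ℕ) : Submodule K (MvPolynomial σ K) :=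
  (restrictTotalDegree σ K d).map (LinearMap.mulLeft K f)

instance [Finite σ] (f : MvPolynomial σ K) (d : ℕ) : Module.Finite K (mulTotalDegreeLE f d) :=
  Module.Finite.map _ _

lemma mem_mulTotalDegreeLE {f q : MvPolynomial σ K} {d : ℕ} :
    q ∈ mulTotalDegreeLE f d ↔ ∃ y : MvPolynomial σ K, y.totalDegree ≤ d ∧ f * y = q := by
  simp [mulTotalDegreeLE, mem_restrictTotalDegree]

lemma finrank_mulTotalDegreeLE {f : MvPolynomial σ K} (hf : f ≠ 0) (d : ℕ) :
    Module.finrank K (mulTotalDegreeLE f d) = Module.finrank K (restrictTotalDegree σ K d) :=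
  (Submodule.equivMapOfInjective _ (mul_right_injective₀ hf) _).finrank_eq.symm

variable {g f₁ h₁ q : MvPolynomial σ K} {α β : ℕ}

lemma exists_eq_mul_of_mem_inf_mulTotalDegreeLE (hg : g ≠ 0) (hrp : IsRelPrime f₁ h₁)
    (hq : q ∈ mulTotalDegreeLE (g * f₁) α ⊓ mulTotalDegreeLE (g * h₁) β) :
    ∃ c, q = g * h₁ * f₁ * c ∧ (f₁ * c).totalDegree ≤ β := by
  obtain ⟨⟨a, -, rfl⟩, ⟨b, hb, hab⟩⟩ := And.imp mem_mulTotalDegreeLE.1 mem_mulTotalDegreeLE.1 hq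
  have hfab : f₁ * a = h₁ * b := mul_left_cancel₀ hg (by rw [← mul_assoc, ← mul_assoc, hab])
  obtain ⟨c, rfl⟩ := hrp.dvd_of_dvd_mul_left ⟨a, hfab.symm⟩
  exact ⟨c, by rw [← hab]; ring, hb⟩

lemma inf_mulTotalDegreeLE_le (hg : g ≠ 0) (hf₁ : f₁ ≠ 0) (hrp : IsRelPrime f₁ h₁) :
    mulTotalDegreeLE (g * f₁) α ⊓ mulTotalDegreeLE (g * h₁) β ≤
      mulTotalDegreeLE (g * h₁ * f₁) (β - f₁.totalDegree) := by
  intro q hq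
  obtain ⟨c, rfl, hc⟩ := exists_eq_mul_of_mem_inf_mulTotalDegreeLE hg hrp hq
  refine mem_mulTotalDegreeLE.2 ⟨c, ?_, rfl⟩
  rcases eq_or_ne c 0 with rfl | hc₀
  · simp
  · rw [totalDegree_mul_of_isDomain hf₁ hc₀] at hc
    omega

lemma inf_mulTotalDegreeLE_eq_bot (hg : g ≠ 0) (hrp : IsRelPrime f₁ h₁)
    (hβ : β < f₁.totalDegree) :
    mulTotalDegreeLE (g * f₁) α ⊓ mulTotalDegreeLE (g * h₁) β = ⊥ := by
  refine eq_bot_iff.2 fun q hq => ?_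
  obtain ⟨c, rfl, hc⟩ := exists_eq_mul_of_mem_inf_mulTotalDegreeLE hg hrp hq
  obtain rfl : c = 0 := by
    by_contra hc₀
    have hf₁ : f₁ ≠ 0 := by rintro rfl; simp at hβ
    rw [totalDegree_mul_of_isDomain hf₁ hc₀] at hc
    omega
  simp

lemma one_le_totalDegree_of_mul_notMem_mulTotalDegreeLE (hf : g * f₁ ≠ 0)
    (hdeg : (g * h₁).totalDegree ≤ (g * f₁).totalDegree + α)
    (hmem : g * h₁ ∉ mulTotalDegreeLE (g * f₁) α) : 1 ≤ f₁.totalDegree := by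
  by_contra! h0
  have hg := left_ne_zero_of_mul hf
  have hf₁ := right_ne_zero_of_mul hf
  obtain ⟨c, rfl⟩ : ∃ c, f₁ = C c := ⟨_, totalDegree_eq_zero_iff_eq_C.1 (by omega)⟩
  have hc : c ≠ 0 := by rintro rfl; simp at hf₁
  have hh₁ : h₁ ≠ 0 := by rintro rfl; simp at hmem
  rw [totalDegree_mul_of_isDomain hg hf₁, totalDegree_mul_of_isDomain hg hh₁,
    totalDegree_C] at hdeg
  refine hmem (mem_mulTotalDegreeLE.2 ⟨C c⁻¹ * h₁, ?_, ?_⟩)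
  · rw [C_mul']
    exact (totalDegree_smul_le _ _).trans (by omega)
  · rw [mul_assoc, ← mul_assoc (C c), ← C_mul, mul_inv_cancel₀ hc, C_1, one_mul]

end Field

section Semiring

variable {σ R : Type*} [CommSemiring R] {q : MvPolynomial σ R}

lemma eq_zero_or_eq_single_of_mem_support (hq : q.totalDegree ≤ 1) {d : σ →₀ ℕ}
    (hd : d ∈ q.support) : d = 0 ∨ ∃ i, d = Finsupp.single i 1 := by
  rcases Nat.le_one_iff_eq_zero_or_eq_one.1 ((le_totalDegree hd).trans hq) with h | h
  · exact Or.inl ((Finsupp.degree_eq_zero_iff d).1 h)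
  · exact Or.inr ((Finsupp.sum_eq_one_iff d).1 h)

lemma eval_eq_of_totalDegree_le_one [Fintype σ] (hq : q.totalDegree ≤ 1) (x : σ → R) :
    eval x q = coeff 0 q + ∑ i, coeff (Finsupp.single i 1) q * x i := by
  classical
  have hsupp : q.support ⊆ insert 0 (Finset.univ.image fun i => Finsupp.single i 1) := by
    intro d hd
    rcases eq_zero_or_eq_single_of_mem_support hq hd with rfl | ⟨i, rfl⟩ <;> simp
  rw [eval_eq', Finset.sum_subset hsupp fun d _ hd => by rw [notMem_support_iff.1 hd, zero_mul],
    Finset.sum_insert (by simp),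
    Finset.sum_image fun i _ j _ h => Finsupp.single_left_injective one_ne_zero h]
  simp [Finsupp.single_apply, pow_ite]

end Semiring

end MvPolynomial

lemma collinear_of_forall_apply_eq {K V : Type*} [Field K] [AddCommGroup V] [Module K V]
    [FiniteDimensional K V] (hV : Module.finrank K V = 2) {ℓ : Module.Dual K V} (hℓ : ℓ ≠ 0)
    {c : K} {s : Set V} (hs : ∀ x ∈ s, ℓ x = c) : Collinear K s := by
  have hspan : vectorSpan K s ≤ LinearMap.ker ℓ := by
    rw [vectorSpan_def, Submodule.span_le]
    rintro _ ⟨x, hx, y, hy, rfl⟩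
    simp [hs x hx, hs y hy]
  have hker := Module.Dual.finrank_ker_add_one_of_ne_zero hℓ
  rw [collinear_iff_finrank_le_one]
  have := Submodule.finrank_mono hspan
  omega

lemma collinear_of_forall_eval_eq_zero {K : Type*} [Field K] {q : MvPolynomial (Fin 2) K}
    (hq : q.totalDegree = 1) {s : Set (Fin 2 → K)} (hs : ∀ x ∈ s, eval x q = 0) :
    Collinear K s := by
  let ℓ : Module.Dual K (Fin 2 → K) := ∑ i, coeff (Finsupp.single i 1) q • LinearMap.proj i
  have hℓ : ∀ x, ℓ x = ∑ i, coeff (Finsupp.single i 1) q * x i := fun x => by simp [ℓ]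
  have hℓ0 : ℓ ≠ 0 := by
    intro h0
    have hcoeff (i : Fin 2) : coeff (Finsupp.single i 1) q = 0 := by
      simpa [hℓ, Pi.single_apply] using LinearMap.congr_fun h0 (Pi.single i 1)
    have : q.totalDegree ≤ 0 := Finset.sup_le fun d hd => by
      rcases eq_zero_or_eq_single_of_mem_support hq.le hd with rfl | ⟨i, rfl⟩
      · simp
      · exact absurd (hcoeff i) (mem_support_iff.1 hd)
    omega
  refine collinear_of_forall_apply_eq (Module.finrank_fin_fun K) hℓ0 (c := -coeff 0 q)
    fun x hx => ?_
  rw [hℓ]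
  linear_combination (eval_eq_of_totalDegree_le_one hq.le x).symm.trans (hs x hx)

lemma finrank_restrictTotalDegree_fin_two (m : ℕ) :
    Module.finrank ℝ (restrictTotalDegree (Fin 2) ℝ m) = Nn m := by
  rw [MvPolynomial.finrank_restrictTotalDegree, Fintype.card_fin, Nn_eq_choose]

lemma mem_PkX {n : ℕ} {Y : Finset Pt} {q : MvPolynomial (Fin 2) ℝ} :
    q ∈ PkX n Y ↔ q.totalDegree ≤ n ∧ ∀ A ∈ Y, eval A q = 0 := by
  simp [PkX, Submodule.mem_iInf, mem_restrictTotalDegree]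

lemma PkX_le (n : ℕ) (Y : Finset Pt) : PkX n Y ≤ restrictTotalDegree (Fin 2) ℝ n := inf_le_left

instance (n : ℕ) (Y : Finset Pt) : Module.Finite ℝ (PkX n Y) :=
  Submodule.finiteDimensional_of_le (PkX_le n Y)

lemma finrank_PkX_add_card {n : ℕ} {X Y : Finset Pt} (hind : NIndep n X) (hYX : Y ⊆ X) :
    Module.finrank ℝ (PkX n Y) + Y.card = Nn n := by
  classical
  set W := restrictTotalDegree (Fin 2) ℝ n
  let E : W →ₗ[ℝ] (Y → ℝ) :=
    LinearMap.pi fun A => (aeval (A : Pt)).toLinearMap ∘ₗ W.subtype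
  have hE : ∀ q A, E q A = eval (A : Pt) (q : MvPolynomial (Fin 2) ℝ) := fun _ _ => rfl
  have hker : (PkX n Y).comap W.subtype = LinearMap.ker E := by
    ext q
    simp [mem_PkX, funext_iff, hE, (mem_restrictTotalDegree _ _ _).1 q.2]
  have hrange : LinearMap.range E = ⊤ := by
    refine eq_top_iff.2 ((Pi.basisFun ℝ Y).span_eq.ge.trans (Submodule.span_le.2 ?_))
    rintro _ ⟨A, rfl⟩
    obtain ⟨p, hpdeg, hpA, hpB⟩ := hind A (hYX A.2)
    refine ⟨⟨p, (mem_restrictTotalDegree _ _ _).2 hpdeg⟩, funext fun B => ?_⟩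
    rw [hE, Pi.basisFun_apply, Pi.single_apply]
    split_ifs with hBA
    · rw [hBA, hpA]
    · exact hpB B (hYX B.2) (Subtype.coe_injective.ne hBA)
  have := LinearMap.finrank_range_add_finrank_ker E
  rw [hrange, finrank_top, Module.finrank_fintype_fun_eq_card, Fintype.card_coe, ← hker,
    (Submodule.comapSubtypeEquivOfLe (PkX_le n Y)).finrank_eq,
    finrank_restrictTotalDegree_fin_two] at this
  omega

lemma finrank_mulTotalDegreeLE_fin_two {f : MvPolynomial (Fin 2) ℝ} (hf : f ≠ 0) (d : ℕ) :
    Module.finrank ℝ (mulTotalDegreeLE f d) = Nn d := by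
  rw [finrank_mulTotalDegreeLE hf, finrank_restrictTotalDegree_fin_two]

section Counting

variable {n : ℕ} {X Y : Finset Pt} {f h : MvPolynomial (Fin 2) ℝ} {α β : ℕ}

lemma mulTotalDegreeLE_le_PkX (hdeg : f.totalDegree + α ≤ n) (hfY : ∀ A ∈ Y, eval A f = 0) :
    mulTotalDegreeLE f α ≤ PkX n Y := by
  intro q hq
  obtain ⟨y, hy, rfl⟩ := mem_mulTotalDegreeLE.1 hq
  exact mem_PkX.2 ⟨(totalDegree_mul f y).trans (by omega), fun A hA => by simp [hfY A hA]⟩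

lemma Nn_add_card_le (hind : NIndep n X) (hYX : Y ⊆ X) (hf : f ≠ 0)
    (hdeg : f.totalDegree + α ≤ n) (hfY : ∀ A ∈ Y, eval A f = 0) : Nn α + Y.card ≤ Nn n := by
  have hle := Submodule.finrank_mono (mulTotalDegreeLE_le_PkX hdeg hfY)
  rw [finrank_mulTotalDegreeLE_fin_two hf] at hle
  have := finrank_PkX_add_card hind hYX
  omega

lemma Nn_add_Nn_add_card_le (hind : NIndep n X) (hYX : Y ⊆ X) (hf : f ≠ 0) (hh : h ≠ 0)
    (hfdeg : f.totalDegree + α ≤ n) (hhdeg : h.totalDegree + β ≤ n)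
    (hfY : ∀ A ∈ Y, eval A f = 0) (hhY : ∀ A ∈ Y, eval A h = 0) :
    Nn α + Nn β + Y.card ≤
      Nn n + Module.finrank ℝ (mulTotalDegreeLE f α ⊓ mulTotalDegreeLE h β : Submodule ℝ _) := by
  have hsup := Submodule.finrank_mono
    (sup_le (mulTotalDegreeLE_le_PkX hfdeg hfY) (mulTotalDegreeLE_le_PkX hhdeg hhY))
  have hsum := Submodule.finrank_sup_add_finrank_inf_eq (mulTotalDegreeLE f α)
    (mulTotalDegreeLE h β)
  rw [finrank_mulTotalDegreeLE_fin_two hf, finrank_mulTotalDegreeLE_fin_two hh] at hsum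
  have := finrank_PkX_add_card hind hYX
  omega

lemma exists_mem_notMem_mulTotalDegreeLE {S : Submodule ℝ (MvPolynomial (Fin 2) ℝ)}
    [Module.Finite ℝ S] (hf : f ≠ 0) (hS : Nn α < Module.finrank ℝ S) :
    ∃ p ∈ S, p ∉ mulTotalDegreeLE f α := by
  by_contra! hle
  have := Submodule.finrank_mono (show S ≤ mulTotalDegreeLE f α from hle)
  rw [finrank_mulTotalDegreeLE_fin_two hf] at this
  omega

variable {g f₁ h₁ : MvPolynomial (Fin 2) ℝ}

lemma Nn_add_Nn_add_card_le_of_isRelPrime (hind : NIndep n X) (hYX : Y ⊆ X)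
    (hf : g * f₁ ≠ 0) (hh : g * h₁ ≠ 0) (hrp : IsRelPrime f₁ h₁)
    (hfdeg : (g * f₁).totalDegree + α ≤ n) (hhdeg : (g * h₁).totalDegree + β ≤ n)
    (hfY : ∀ A ∈ Y, eval A (g * f₁) = 0) (hhY : ∀ A ∈ Y, eval A (g * h₁) = 0) :
    Nn α + Nn β + Y.card ≤ Nn n + Nn (β - f₁.totalDegree) := by
  have hcount := Nn_add_Nn_add_card_le hind hYX hf hh hfdeg hhdeg hfY hhY
  have hinf := Submodule.finrank_mono
    (inf_mulTotalDegreeLE_le (α := α) (β := β) (left_ne_zero_of_mul hf)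
      (right_ne_zero_of_mul hf) hrp)
  rw [finrank_mulTotalDegreeLE_fin_two (mul_ne_zero hh (right_ne_zero_of_mul hf))] at hinf
  omega

lemma Nn_add_Nn_add_card_le_of_lt (hind : NIndep n X) (hYX : Y ⊆ X)
    (hf : g * f₁ ≠ 0) (hh : g * h₁ ≠ 0) (hrp : IsRelPrime f₁ h₁)
    (hfdeg : (g * f₁).totalDegree + α ≤ n) (hhdeg : (g * h₁).totalDegree + β ≤ n)
    (hfY : ∀ A ∈ Y, eval A (g * f₁) = 0) (hhY : ∀ A ∈ Y, eval A (g * h₁) = 0)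
    (hβ : β < f₁.totalDegree) :
    Nn α + Nn β + Y.card ≤ Nn n := by
  have hcount := Nn_add_Nn_add_card_le hind hYX hf hh hfdeg hhdeg hfY hhY
  rwa [inf_mulTotalDegreeLE_eq_bot (left_ne_zero_of_mul hf) hrp hβ, finrank_bot,
    add_zero] at hcount

lemma card_le_totalDegree_mul (hind : NIndep n X) (hYX : Y ⊆ X) (hf : f ≠ 0) (hh : h ≠ 0)
    (hrp : IsRelPrime f h) (hdeg : f.totalDegree + h.totalDegree ≤ n)
    (hfY : ∀ A ∈ Y, eval A f = 0) (hhY : ∀ A ∈ Y, eval A h = 0) :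
    Y.card ≤ f.totalDegree * h.totalDegree := by
  obtain ⟨c, rfl⟩ : ∃ c, n = f.totalDegree + h.totalDegree + c := ⟨_, (Nat.add_sub_of_le hdeg).symm⟩
  have hcount := Nn_add_Nn_add_card_le_of_isRelPrime (g := 1) (α := h.totalDegree + c)
    (β := f.totalDegree + c) hind hYX (by simpa) (by simpa) hrp (by simp; omega) (by simp; omega)
    (by simpa) (by simpa)
  rw [Nat.add_sub_cancel_left] at hcount
  have := Nn_add_add f.totalDegree h.totalDegree c
  omega

end Counting

section MainLemma

variable {n u : ℕ} {X : Finset Pt} {g σ₁ p₁ : MvPolynomial (Fin 2) ℝ}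

lemma le_totalDegree_add_of_forall_eval_eq_zero (hind : NIndep n X)
    (hX : X.card + Nn (u + 3) = Nn n + 3) {f : MvPolynomial (Fin 2) ℝ} (hf : f ≠ 0)
    (hfX : ∀ A ∈ X, eval A f = 0) : n ≤ f.totalDegree + u + 2 := by
  by_contra! hlt
  have := Nn_add_card_le hind subset_rfl hf (α := u + 3) (by omega) hfX
  omega

lemma totalDegree_le_one_of_isRelPrime (hind : NIndep n X)
    (hX : X.card + Nn (u + 3) = Nn n + 3) (hu : 1 ≤ u) (hσ : g * σ₁ ≠ 0) (hp : g * p₁ ≠ 0)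
    (hrp : IsRelPrime σ₁ p₁) (hσdeg : (g * σ₁).totalDegree + u + 2 = n)
    (hpdeg : (g * p₁).totalDegree + u ≤ n) (hσX : ∀ A ∈ X, eval A (g * σ₁) = 0)
    (hpX : ∀ A ∈ X, eval A (g * p₁) = 0) : σ₁.totalDegree ≤ 1 := by
  by_contra! hs
  have hu3 : Nn (u + 3) = Nn (u + 2) + (u + 4) := Nn_succ (u + 2)
  rcases le_or_gt σ₁.totalDegree u with hsu | hsu
  · have hcount := Nn_add_Nn_add_card_le_of_isRelPrime (α := u + 2) (β := u) hind subset_rfl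
      hσ hp hrp (by omega) hpdeg hσX hpX
    have hu2 := Nn_add_two (u - 2)
    rw [Nat.sub_add_cancel (by omega)] at hu2
    have := Nn_mono (show u - σ₁.totalDegree ≤ u - 2 by omega)
    omega
  · have hcount := Nn_add_Nn_add_card_le_of_lt (α := u + 2) (β := u) hind subset_rfl
      hσ hp hrp (by omega) hpdeg hσX hpX hsu
    have := two_mul_add_one_le_Nn u
    omega

lemma ncard_zero_add_Nn_eq_and_collinear_ne_zero (hind : NIndep n X)
    (hX : X.card + Nn (u + 3) = Nn n + 3) (hu : 1 ≤ u) (hσ : g * σ₁ ≠ 0) (hp : g * p₁ ≠ 0)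
    (hrp : IsRelPrime σ₁ p₁) (hσ₁ : σ₁.totalDegree = 1)
    (hσdeg : (g * σ₁).totalDegree + u + 2 = n) (hpdeg : (g * p₁).totalDegree + u ≤ n)
    (hσX : ∀ A ∈ X, eval A (g * σ₁) = 0) (hpX : ∀ A ∈ X, eval A (g * p₁) = 0) :
    {A ∈ (↑X : Set Pt) | eval A g = 0}.ncard + Nn (u + 3) = Nn n ∧
      Collinear ℝ {A ∈ (↑X : Set Pt) | eval A g ≠ 0} := by
  classical
  have hg := left_ne_zero_of_mul hσ
  have hσ₁0 := right_ne_zero_of_mul hσ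
  have hp₁0 := right_ne_zero_of_mul hp
  rw [totalDegree_mul_of_isDomain hg hσ₁0, hσ₁] at hσdeg
  rw [totalDegree_mul_of_isDomain hg hp₁0] at hpdeg
  set Y := X.filter fun A => eval A g = 0
  set Z := X.filter fun A => eval A g ≠ 0
  have hvan {f : MvPolynomial (Fin 2) ℝ} (hf : ∀ A ∈ X, eval A (g * f) = 0) :
      ∀ A ∈ Z, eval A f = 0 := by
    intro A hA
    rw [Finset.mem_filter] at hA
    simpa [hA.2] using hf A hA.1
  have hY := Nn_add_card_le (Y := Y) hind (X.filter_subset _) hg (α := u + 3) (by omega)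
    fun A hA => (Finset.mem_filter.1 hA).2
  have hZ := card_le_totalDegree_mul (Y := Z) hind (X.filter_subset _) hσ₁0 hp₁0 hrp (by omega)
    (hvan hσX) (hvan hpX)
  have hYZ : Y.card + Z.card = X.card := Finset.card_filter_add_card_filter_not _
  rw [hσ₁] at hZ
  have hY_eq : {A ∈ (↑X : Set Pt) | eval A g = 0} = ↑Y := by
    ext; simp [Y]
  have hZ_eq : {A ∈ (↑X : Set Pt) | eval A g ≠ 0} = ↑Z := by
    ext; simp [Z]
  rw [hY_eq, hZ_eq, Set.ncard_coe_finset]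
  exact ⟨by omega, collinear_of_forall_eval_eq_zero hσ₁ (hvan hσX)⟩

end MainLemma

/-- **Lemma 9 (main lemma).** Under the hypotheses of the main theorem, if additionally there is
a curve of degree `≤ k-2` passing through all the nodes of `X`, then all the nodes of `X` but
three (collinear) lie in a maximal curve of degree `k-3`. -/
theorem stmt3 (n k : ℕ) (hk4 : 4 ≤ k) (hkn : k + 1 ≤ n) (X : Finset Pt)
    (hind : NIndep n X) (hcard : X.card = dnk n (k - 3) + 3)
    (hdim : 7 ≤ Module.finrank ℝ (PkX k X))
    (σ₀ : MvPolynomial (Fin 2) ℝ) (hσ₀ : σ₀ ≠ 0) (hσ₀deg : σ₀.totalDegree ≤ k - 2)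
    (hσ₀van : ∀ A ∈ X, eval A σ₀ = 0) :
    ∃ μ : MvPolynomial (Fin 2) ℝ, μ ≠ 0 ∧ μ.totalDegree = k - 3 ∧
      {A ∈ (↑X : Set Pt) | eval A μ = 0}.ncard = dnk n (k - 3) ∧
      Collinear ℝ {A ∈ (↑X : Set Pt) | eval A μ ≠ 0} := by
  obtain ⟨u, rfl, hu⟩ : ∃ u, n = k + u ∧ 1 ≤ u := ⟨n - k, by omega, by omega⟩
  have hdnk : dnk (k + u) (k - 3) + Nn (u + 3) = Nn (k + u) := by
    rw [dnk, show k + u - (k - 3) = u + 3 by omega]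
    exact Nat.sub_add_cancel (Nn_mono (by omega))
  have hX : X.card + Nn (u + 3) = Nn (k + u) + 3 := by omega
  have hσ₀k : σ₀.totalDegree + u + 2 = k + u := by
    have := le_totalDegree_add_of_forall_eval_eq_zero hind hX hσ₀ hσ₀van
    omega
  obtain ⟨p, hpX, hpσ₀⟩ := exists_mem_notMem_mulTotalDegreeLE (S := PkX k X) (α := 2) hσ₀ hdim
  obtain ⟨hpdeg, hpvan⟩ := mem_PkX.1 hpX
  have hp : p ≠ 0 := by rintro rfl; exact hpσ₀ (zero_mem _)
  obtain ⟨σ₁, p₁, g, hrp, rfl, rfl⟩ := UniqueFactorizationMonoid.exists_reduced_factors σ₀ hσ₀ p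
  have hσ₁ : σ₁.totalDegree = 1 :=
    le_antisymm
      (totalDegree_le_one_of_isRelPrime hind hX hu hσ₀ hp hrp hσ₀k (by omega) hσ₀van hpvan)
      (one_le_totalDegree_of_mul_notMem_mulTotalDegreeLE hσ₀ (by omega) hpσ₀)
  obtain ⟨hcardY, hcollinear⟩ := ncard_zero_add_Nn_eq_and_collinear_ne_zero hind hX hu hσ₀ hp
    hrp hσ₁ hσ₀k (by omega) hσ₀van hpvan
  refine ⟨g, left_ne_zero_of_mul hσ₀, ?_, by omega, hcollinear⟩
  rw [totalDegree_mul_of_isDomain (left_ne_zero_of_mul hσ₀) (right_ne_zero_of_mul hσ₀), hσ₁]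
    at hσ₀k
  omega
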